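/- arXiv:2212.09888 — 2 statements merged into one kernel-verified Lean document; each statement's English description precedes it below -/
import Mathlib

section
/- Let F be a group and N a normal abelian subgroup of exponent 2 containing [F,F]. Then for any x, y, z in F with z in N, the iterated commutators satisfy [x,[y,z]] = [y,[x,z]]. -/
/-!
Write the conjugation action of `F` on `N` additively. For `z ∈ N`, `⁅y, z⁆ = y • z - z`, so
`⁅x, ⁅y, z⁆⁆ = xy • z - x • z - y • z + z`, and the claim amounts to `xy • z = yx • z`. This
holds because `xy = ⁅x, y⁆ yx` and the commutator `⁅x, y⁆` lies in the abelian group `N`,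
hence acts trivially on it.
-/

open scoped commutatorElement

section

variable {G : Type*} [Group G]

theorem commutatorElement_commutatorElement_eq_mul (x y z : G) :
    ⁅x, ⁅y, z⁆⁆ = ⁅x * y, z⁆ * ⁅z, x⁆ * ⁅z, y⁆ := by
  simp only [commutatorElement_def]
  group

theorem commutatorElement_mem_commutator (x y : G) : ⁅x, y⁆ ∈ commutator G :=
  Subgroup.commutator_mem_commutator (Subgroup.mem_top x) (Subgroup.mem_top y)

variable {N : Subgroup G} [IsMulCommutative N]

theorem commutatorElement_mul_left_of_mem [N.Normal] {c z : G} (hc : c ∈ N) (hz : z ∈ N)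
    (g : G) : ⁅c * g, z⁆ = ⁅g, z⁆ := by
  have hgz : g * z * g⁻¹ ∈ N := Subgroup.Normal.conj_mem ‹_› z hz g
  calc ⁅c * g, z⁆ = c * (g * z * g⁻¹) * c⁻¹ * z⁻¹ := by
        simp only [commutatorElement_def]
        group
    _ = ⁅g, z⁆ := by rw [setLike_mul_comm hc hgz, mul_inv_cancel_right, commutatorElement_def]

theorem commutatorElement_mul_comm_left_of_mem (hcomm : commutator G ≤ N) {z : G} (hz : z ∈ N)
    (x y : G) : ⁅x * y, z⁆ = ⁅y * x, z⁆ := by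
  have : N.Normal := .of_commutator_le G hcomm
  have hxy : x * y = ⁅x, y⁆ * (y * x) := by
    simp only [commutatorElement_def]
    group
  rw [hxy, commutatorElement_mul_left_of_mem (hcomm (commutatorElement_mem_commutator x y)) hz]

end

theorem commutator_swap_of_mem_of_exponent_two_general {F : Type*} [Group F] (N : Subgroup F)
    (habel : ∀ a ∈ N, ∀ b ∈ N, a * b = b * a)
    (hcomm : commutator F ≤ N)
    (x y z : F) (hz : z ∈ N) :
    ⁅x, ⁅y, z⁆⁆ = ⁅y, ⁅x, z⁆⁆ := by
  have : IsMulCommutative N := isMulCommutative_iff_of_setLike.mpr habel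
  have hzx : ⁅z, x⁆ ∈ N := hcomm (commutatorElement_mem_commutator z x)
  have hzy : ⁅z, y⁆ ∈ N := hcomm (commutatorElement_mem_commutator z y)
  rw [commutatorElement_commutatorElement_eq_mul, commutatorElement_commutatorElement_eq_mul,
    commutatorElement_mul_comm_left_of_mem hcomm hz, mul_assoc, mul_assoc,
    setLike_mul_comm hzx hzy]

/-- If `N` is an abelian normal subgroup of `F` of exponent 2 containing `[F,F]`,
then for `z ∈ N` we have `[x,[y,z]] = [y,[x,z]]`. -/
theorem commutator_swap_of_mem_of_exponent_two {F : Type*} [Group F] (N : Subgroup F)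
    (hN : N.Normal) (habel : ∀ a ∈ N, ∀ b ∈ N, a * b = b * a)
    (hexp : ∀ a ∈ N, a ^ 2 = 1) (hcomm : commutator F ≤ N)
    (x y z : F) (hz : z ∈ N) :
    ⁅x, ⁅y, z⁆⁆ = ⁅y, ⁅x, z⁆⁆ :=
  commutator_swap_of_mem_of_exponent_two_general N habel hcomm x y z hz
end

section
/- Let F = A * B be the free (or amalgam-free) product of two finite groups A and B of orders a and b, and let π: F → A × B be the canonical surjection. Then the kernel of π is a free group of rank (a−1)(b−1). -/
open Monoid Function

namespace KerCoprodAux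

universe u v

variable {A : Type u} {B : Type v} [Group A] [Group B]




/-- The index set: pairs of nontrivial elements. -/
abbrev S (A B : Type*) [Group A] [Group B] := {a : A // a ≠ 1} × {b : B // b ≠ 1}

/-- The commutator `[a, b]` in `A ∗ B`. -/
def cc (a : A) (b : B) : Coprod A B :=
  Coprod.inl a * Coprod.inr b * Coprod.inl a⁻¹ * Coprod.inr b⁻¹

/-- The canonical map from the free group on `S A B` to `A ∗ B`. -/
def F : FreeGroup (S A B) →* Coprod A B :=
  FreeGroup.lift fun s => cc (s.1 : A) (s.2 : B)

lemma F_of (s : S A B) : F (FreeGroup.of s) = cc (s.1 : A) (s.2 : B) :=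
  FreeGroup.lift_apply_of

lemma cc_mem (a : A) (b : B) : cc a b ∈ F.range := by
  by_cases ha : a = 1
  · have : cc a b = 1 := by simp [cc, ha]
    rw [this]; exact one_mem _
  by_cases hb : b = 1
  · have : cc a b = 1 := by simp [cc, hb]
    rw [this]; exact one_mem _
  exact ⟨FreeGroup.of (⟨⟨a, ha⟩, ⟨b, hb⟩⟩ : S A B), F_of _⟩

lemma conj_inl (a a' : A) (b' : B) :
    Coprod.inl a * cc a' b' * (Coprod.inl a)⁻¹ = cc (a * a') b' * (cc a b')⁻¹ := by
  simp only [cc, map_mul, map_inv, mul_inv_rev]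
  group

lemma conj_inr (b : B) (a' : A) (b' : B) :
    Coprod.inr b * cc a' b' * (Coprod.inr b)⁻¹ = (cc a' b)⁻¹ * cc a' (b * b') := by
  simp only [cc, map_mul, map_inv, mul_inv_rev]
  group

lemma conj_mem : ∀ g : Coprod A B, ∀ x ∈ F.range, g * x * g⁻¹ ∈ F.range := by
  intro g
  induction g using Coprod.induction_on with
  | inl a =>
    rintro _ ⟨w, rfl⟩
    induction w using FreeGroup.induction_on with
    | C1 =>
      have h0 : Coprod.inl a * F (1 : FreeGroup (S A B)) * (Coprod.inl a)⁻¹ = 1 := by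
        rw [map_one, mul_one, mul_inv_cancel]
      rw [h0]; exact one_mem _
    | of s =>
      rw [F_of, conj_inl]
      exact mul_mem (cc_mem _ _) (inv_mem (cc_mem _ _))
    | inv_of s ih =>
      have h2 : Coprod.inl a * F (FreeGroup.of s)⁻¹ * (Coprod.inl a)⁻¹
          = (Coprod.inl a * F (FreeGroup.of s) * (Coprod.inl a)⁻¹)⁻¹ := by
        rw [map_inv]; group
      rw [h2]
      exact inv_mem ih
    | mul x y ihx ihy =>
      have h2 : Coprod.inl a * F (x * y) * (Coprod.inl a)⁻¹
          = (Coprod.inl a * F x * (Coprod.inl a)⁻¹) *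
            (Coprod.inl a * F y * (Coprod.inl a)⁻¹) := by
        rw [map_mul]; group
      rw [h2]
      exact mul_mem ihx ihy
  | inr b =>
    rintro _ ⟨w, rfl⟩
    induction w using FreeGroup.induction_on with
    | C1 =>
      have h0 : Coprod.inr b * F (1 : FreeGroup (S A B)) * (Coprod.inr b)⁻¹ = 1 := by
        rw [map_one, mul_one, mul_inv_cancel]
      rw [h0]; exact one_mem _
    | of s =>
      rw [F_of, conj_inr]
      exact mul_mem (inv_mem (cc_mem _ _)) (cc_mem _ _)
    | inv_of s ih =>
      have h2 : Coprod.inr b * F (FreeGroup.of s)⁻¹ * (Coprod.inr b)⁻¹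
          = (Coprod.inr b * F (FreeGroup.of s) * (Coprod.inr b)⁻¹)⁻¹ := by
        rw [map_inv]; group
      rw [h2]
      exact inv_mem ih
    | mul x y ihx ihy =>
      have h2 : Coprod.inr b * F (x * y) * (Coprod.inr b)⁻¹
          = (Coprod.inr b * F x * (Coprod.inr b)⁻¹) *
            (Coprod.inr b * F y * (Coprod.inr b)⁻¹) := by
        rw [map_mul]; group
      rw [h2]
      exact mul_mem ihx ihy
  | mul x y ihx ihy =>
    intro z hz
    have h : x * y * z * (x * y)⁻¹ = x * (y * z * y⁻¹) * x⁻¹ := by group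
    rw [h]
    exact ihx _ (ihy _ hz)

lemma decomp (g : Coprod A B) :
    ∃ h ∈ F.range, g = h * Coprod.inl (Coprod.fst g) * Coprod.inr (Coprod.snd g) := by
  induction g using Coprod.induction_on with
  | inl a => exact ⟨1, one_mem _, by simp⟩
  | inr b => exact ⟨1, one_mem _, by simp⟩
  | mul x y ihx ihy =>
    obtain ⟨h1, hh1, hx⟩ := ihx
    obtain ⟨h2, hh2, hy⟩ := ihy
    set a1 := Coprod.fst x with ha1
    set b1 := Coprod.snd x with hb1
    set a2 := Coprod.fst y with ha2
    set b2 := Coprod.snd y with hb2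
    have hfst : Coprod.fst (x * y) = a1 * a2 := by rw [map_mul]
    have hsnd : Coprod.snd (x * y) = b1 * b2 := by rw [map_mul]
    refine ⟨h1 * ((Coprod.inl a1 * Coprod.inr b1) * h2 * (Coprod.inl a1 * Coprod.inr b1)⁻¹) *
        (Coprod.inl (a1 * a2) * cc a2⁻¹ b1 * (Coprod.inl (a1 * a2))⁻¹), ?_, ?_⟩
    · exact mul_mem (mul_mem hh1 (conj_mem _ _ hh2)) (conj_mem _ _ (cc_mem _ _))
    · rw [hfst, hsnd]
      conv_lhs => rw [hx, hy]
      simp only [cc, map_mul, map_inv, mul_inv_rev]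
      group

lemma range_F_eq_ker : F.range = (Coprod.toProd : Coprod A B →* A × B).ker := by
  apply le_antisymm
  · rintro _ ⟨w, rfl⟩
    have hcomp : (Coprod.toProd : Coprod A B →* A × B).comp F = 1 := by
      apply FreeGroup.ext_hom
      intro s
      simp [F_of, cc, Prod.ext_iff]
    rw [MonoidHom.mem_ker, ← MonoidHom.comp_apply, hcomp, MonoidHom.one_apply]
  · intro g hg
    obtain ⟨h, hh, hgeq⟩ := decomp g
    have h1 : Coprod.fst g = 1 := by
      rw [← Coprod.fst_toProd, MonoidHom.mem_ker.mp hg]; rfl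
    have h2 : Coprod.snd g = 1 := by
      rw [← Coprod.snd_toProd, MonoidHom.mem_ker.mp hg]; rfl
    rw [h1, h2] at hgeq
    have hgh : g = h := by rw [hgeq]; simp
    rw [hgh]; exact hh




/-- Nonempty reduced words have nontrivial product. -/
lemma neword_prod_ne_one {ι : Type*} {M : ι → Type*} [∀ i, Monoid (M i)] {i j : ι}
    (w : CoprodI.NeWord M i j) : w.prod ≠ 1 := by
  classical
  intro h
  have h1 : CoprodI.Word.prod w.toWord = CoprodI.Word.prod (CoprodI.Word.empty) := by
    rw [CoprodI.Word.prod_empty]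
    exact h
  have h2 : w.toWord = CoprodI.Word.empty :=
    (CoprodI.Word.equiv (M := M)).symm.injective h1
  exact w.toList_ne_nil (congrArg CoprodI.Word.toList h2)

/-- Tails of reduced words are reduced. -/
lemma reduce_tail_fix {α : Type*} [DecidableEq α] (p : α × Bool) (L : List (α × Bool))
    (h : FreeGroup.reduce (p :: L) = p :: L) : FreeGroup.reduce L = L := by
  rcases (FreeGroup.reduce.red (L := L)).cases_head with he | ⟨c, hstep, -⟩
  · exact he.symm
  · exfalso
    have h1 : FreeGroup.reduce (p :: L) = FreeGroup.reduce (p :: c) :=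
      FreeGroup.reduce.Step.eq hstep.cons
    have h2 : (FreeGroup.reduce (p :: c)).length ≤ (p :: c).length :=
      FreeGroup.Red.length_le FreeGroup.reduce.red
    have h3 : c.length + 2 = L.length := hstep.length
    rw [h] at h1
    have h4 := congrArg List.length h1
    simp only [List.length_cons] at h4 h2 h3
    omega

/-- A reduced word has no adjacent cancelling letters. -/
lemma reduced_chain' {α : Type*} [DecidableEq α] :
    ∀ L : List (α × Bool), FreeGroup.reduce L = L →
      L.Chain' (fun p q => p.1 = q.1 → p.2 = q.2)
  | [], _ => List.isChain_nil
  | [p], _ => List.isChain_singleton p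
  | p :: q :: L, h => by
    refine List.isChain_cons_cons.2 ?_
    refine ⟨?_, reduced_chain' (q :: L) (reduce_tail_fix p _ h)⟩
    intro h1
    by_contra h2
    have hb : q.2 = !p.2 := by
      cases hp : p.2 <;> cases hq : q.2 <;> simp_all
    have hq : q = (p.1, !p.2) := Prod.ext h1.symm hb
    refine FreeGroup.reduce.not (L₁ := p :: q :: L) (L₂ := ([] : List (α × Bool)))
      (L₃ := L) (x := p.1) (b := p.2) ?_
    rw [h, hq]
    rfl

lemma chain'_toWord {α : Type*} [DecidableEq α] (x : FreeGroup α) :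
    x.toWord.Chain' (fun p q => p.1 = q.1 → p.2 = q.2) :=
  reduced_chain' _ (FreeGroup.reduce_toWord x)


/-- The two-element family of groups. -/
abbrev GG (A : Type u) (B : Type v) : Bool → Type (max u v) :=
  fun b => cond b (ULift.{v} A) (ULift.{u} B)

instance : ∀ b, Group (GG A B b)
  | true => inferInstanceAs (Group (ULift A))
  | false => inferInstanceAs (Group (ULift B))

/-- The inclusion of `A`. -/
def T (a : A) : CoprodI (GG A B) := CoprodI.of (show GG A B true from ULift.up a)

/-- The inclusion of `B`. -/
def Fb (b : B) : CoprodI (GG A B) := CoprodI.of (show GG A B false from ULift.up b)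

@[simp] lemma T_mul (a a' : A) : T (B := B) (a * a') = T a * T a' :=
  map_mul (CoprodI.of (M := GG A B) (i := true)) (ULift.up a) (ULift.up a')

@[simp] lemma T_inv (a : A) : T (B := B) a⁻¹ = (T a)⁻¹ :=
  map_inv (CoprodI.of (M := GG A B) (i := true)) (ULift.up a)

@[simp] lemma Fb_mul (b b' : B) : Fb (A := A) (b * b') = Fb b * Fb b' :=
  map_mul (CoprodI.of (M := GG A B) (i := false)) (ULift.up b) (ULift.up b')

@[simp] lemma Fb_inv (b : B) : Fb (A := A) b⁻¹ = (Fb b)⁻¹ :=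
  map_inv (CoprodI.of (M := GG A B) (i := false)) (ULift.up b)

lemma up_ne_one_t {a : A} (h : a ≠ 1) : (show GG A B true from ULift.up a) ≠ 1 :=
  fun hh => h (congrArg ULift.down hh)

lemma up_ne_one_f {b : B} (h : b ≠ 1) : (show GG A B false from ULift.up b) ≠ 1 :=
  fun hh => h (congrArg ULift.down hh)

/-- singleton `NeWord` in `A`. -/
def sgT (a : A) (h : a ≠ 1) : CoprodI.NeWord (GG A B) true true :=
  .singleton (show GG A B true from ULift.up a) (up_ne_one_t h)

/-- singleton `NeWord` in `B`. -/
def sgF (b : B) (h : b ≠ 1) : CoprodI.NeWord (GG A B) false false :=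
  .singleton (show GG A B false from ULift.up b) (up_ne_one_f h)

@[simp] lemma sgT_prod (a : A) (h : a ≠ 1) :
    (sgT (B := B) a h).prod = T a :=
  CoprodI.NeWord.prod_singleton _ _

@[simp] lemma sgF_prod (b : B) (h : b ≠ 1) :
    (sgF (A := A) b h).prod = Fb b :=
  CoprodI.NeWord.prod_singleton _ _


/-- The commutator in `CoprodI (GG A B)`. -/
def DD (s : S A B) : CoprodI (GG A B) :=
  T (s.1 : A) * Fb (s.2 : B) * (T (s.1 : A))⁻¹ * (Fb (s.2 : B))⁻¹

/-- The canonical map from the free group to `CoprodI (GG A B)`. -/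
def G : FreeGroup (S A B) →* CoprodI (GG A B) :=
  FreeGroup.lift fun s => DD s

lemma G_of (s : S A B) : G (FreeGroup.of s) = DD s := FreeGroup.lift_apply_of

lemma mk_cons (s : S A B) (e : Bool) (L : List (S A B × Bool)) :
    FreeGroup.mk ((s, e) :: L) =
      (cond e (FreeGroup.of s) (FreeGroup.of s)⁻¹) * FreeGroup.mk L := by
  have h1 : FreeGroup.mk ((s, e) :: L) = FreeGroup.mk [(s, e)] * FreeGroup.mk L := by
    rw [FreeGroup.mul_mk]; rfl
  rw [h1]
  congr 1
  cases e
  · rw [show (FreeGroup.of s)⁻¹ = FreeGroup.mk (FreeGroup.invRev [(s, true)]) from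
      FreeGroup.inv_mk]
    rfl
  · rfl

lemma G_cons (s : S A B) (e : Bool) (L : List (S A B × Bool)) :
    G (FreeGroup.mk ((s, e) :: L)) = (cond e (DD s) (DD s)⁻¹) * G (FreeGroup.mk L) := by
  rw [mk_cons, map_mul]
  congr 1
  cases e
  · show G (FreeGroup.of s)⁻¹ = (DD s)⁻¹
    rw [map_inv, G_of]
  · exact G_of s

lemma key (L : List (S A B × Bool)) :
    ∀ (s : S A B) (e : Bool),
      ((s, e) :: L).Chain' (fun p q => p.1 = q.1 → p.2 = q.2) →
      ∃ (j : Bool) (rest : CoprodI.NeWord (GG A B) e j),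
        G (FreeGroup.mk ((s, e) :: L)) =
          (cond e (T (s.1 : A) * Fb (s.2 : B)) (Fb (s.2 : B) * T (s.1 : A))) * rest.prod := by
  induction L with
  | nil =>
    rintro ⟨⟨a, ha⟩, ⟨b, hb⟩⟩ e -
    cases e
    · refine ⟨true, .append (sgF b⁻¹ (inv_ne_one.2 hb)) (by decide) (sgT a⁻¹ (inv_ne_one.2 ha)),
        ?_⟩
      rw [G_cons, ← FreeGroup.one_eq_mk, map_one, mul_one]
      simp [DD, mul_inv_rev, mul_assoc]
    · refine ⟨false, .append (sgT a⁻¹ (inv_ne_one.2 ha)) (by decide) (sgF b⁻¹ (inv_ne_one.2 hb)),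
        ?_⟩
      rw [G_cons, ← FreeGroup.one_eq_mk, map_one, mul_one]
      simp [DD, mul_assoc]
  | cons p L2 ih =>
    rintro s e hch
    obtain ⟨t, e2⟩ := p
    have hR := (List.isChain_cons_cons.1 hch).1
    have hch2 := (List.isChain_cons_cons.1 hch).2
    obtain ⟨j, rest, hrest⟩ := ih t e2 hch2
    have hval : G (FreeGroup.mk ((s, e) :: (t, e2) :: L2)) =
        (cond e (DD s) (DD s)⁻¹) *
          ((cond e2 (T (t.1 : A) * Fb (t.2 : B)) (Fb (t.2 : B) * T (t.1 : A))) * rest.prod) := by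
      rw [G_cons, hrest]
    obtain ⟨⟨a, ha⟩, ⟨b, hb⟩⟩ := s
    obtain ⟨⟨a2, ha2⟩, ⟨b2, hb2⟩⟩ := t
    cases e <;> cases e2
    · -- e = false, e2 = false
      refine ⟨j, .append (.append (sgF b⁻¹ (inv_ne_one.2 hb)) (by decide)
          (sgT a⁻¹ (inv_ne_one.2 ha))) (by decide)
          (.append (.append (sgF b2 hb2) (by decide) (sgT a2 ha2)) (by decide) rest), ?_⟩
      rw [hval]
      simp [DD, mul_inv_rev, mul_assoc]
    · -- e = false, e2 = true : last letter of (DD s)⁻¹ is (T a)⁻¹, next is T a2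
      by_cases haa : a = a2
      · -- full cancellation; then b ≠ b2
        subst haa
        have hst : b ≠ b2 := by
          intro hbb
          exact Bool.noConfusion (hR (by subst hbb; rfl))
        refine ⟨j, .append (sgF (b⁻¹ * b2) (by
            rw [Ne, inv_mul_eq_one]; exact hst)) (by decide) rest, ?_⟩
        rw [hval]
        simp [DD, mul_inv_rev, mul_assoc]
      · refine ⟨j, .append (.append (.append (sgF b⁻¹ (inv_ne_one.2 hb)) (by decide)
          (sgT (a⁻¹ * a2) (by rw [Ne, inv_mul_eq_one]; exact haa))) (by decide)
          (sgF b2 hb2)) (by decide) rest, ?_⟩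
        rw [hval]
        simp [DD, mul_inv_rev, mul_assoc]
    · -- e = true, e2 = false : last letter of DD s is (Fb b)⁻¹, next is Fb b2
      by_cases hbb : b = b2
      · subst hbb
        have hst : a ≠ a2 := by
          intro haa
          exact Bool.noConfusion (hR (by subst haa; rfl))
        refine ⟨j, .append (sgT (a⁻¹ * a2) (by
            rw [Ne, inv_mul_eq_one]; exact hst)) (by decide) rest, ?_⟩
        rw [hval]
        simp [DD, mul_assoc]
      · refine ⟨j, .append (.append (.append (sgT a⁻¹ (inv_ne_one.2 ha)) (by decide)
          (sgF (b⁻¹ * b2) (by rw [Ne, inv_mul_eq_one]; exact hbb))) (by decide)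
          (sgT a2 ha2)) (by decide) rest, ?_⟩
        rw [hval]
        simp [DD, mul_assoc]
    · -- e = true, e2 = true
      refine ⟨j, .append (.append (sgT a⁻¹ (inv_ne_one.2 ha)) (by decide)
          (sgF b⁻¹ (inv_ne_one.2 hb))) (by decide)
          (.append (.append (sgT a2 ha2) (by decide) (sgF b2 hb2)) (by decide) rest), ?_⟩
      rw [hval]
      simp [DD, mul_assoc]

lemma G_injective : Function.Injective (G : FreeGroup (S A B) →* CoprodI (GG A B)) := by
  classical
  rw [injective_iff_map_eq_one]
  intro x hx
  by_contra hne
  have hnil : x.toWord ≠ [] := fun h => hne (FreeGroup.toWord_eq_nil_iff.1 h)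
  obtain ⟨⟨s, e⟩, L, hL⟩ : ∃ p L, x.toWord = p :: L := by
    cases h : x.toWord with
    | nil => exact absurd h hnil
    | cons p L => exact ⟨p, L, rfl⟩
  have hch : ((s, e) :: L).Chain' (fun p q => p.1 = q.1 → p.2 = q.2) := by
    rw [← hL]; exact chain'_toWord x
  obtain ⟨j, rest, hrest⟩ := key L s e hch
  have hx2 : G (FreeGroup.mk ((s, e) :: L)) = 1 := by
    rw [← hL, FreeGroup.mk_toWord, hx]
  rw [hrest] at hx2
  obtain ⟨⟨a, ha⟩, ⟨b, hb⟩⟩ := s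
  cases e
  · exact neword_prod_ne_one
      (CoprodI.NeWord.append (.append (sgF b hb) (by decide) (sgT a ha)) (by decide) rest)
      (by rw [← hx2]; simp [mul_assoc])
  · exact neword_prod_ne_one
      (CoprodI.NeWord.append (.append (sgT a ha) (by decide) (sgF b hb)) (by decide) rest)
      (by rw [← hx2]; simp [mul_assoc])

/-- The comparison map `A ∗ B →* CoprodI (GG A B)`. -/
def Phi : Coprod A B →* CoprodI (GG A B) :=
  Coprod.lift ((CoprodI.of (M := GG A B) (i := true)).comp MulEquiv.ulift.symm.toMonoidHom)
    ((CoprodI.of (M := GG A B) (i := false)).comp MulEquiv.ulift.symm.toMonoidHom)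

lemma Phi_comp_F : (Phi : Coprod A B →* CoprodI (GG A B)).comp F = G := by
  apply FreeGroup.ext_hom
  intro s
  rw [MonoidHom.comp_apply, F_of, G_of]
  simp only [cc, DD, map_mul, map_inv]
  rfl

lemma F_injective : Function.Injective (F : FreeGroup (S A B) →* Coprod A B) := by
  intro x y h
  apply G_injective
  rw [← Phi_comp_F, MonoidHom.comp_apply, MonoidHom.comp_apply, h]

end KerCoprodAux

/-- The kernel of the canonical surjection `A ∗ B → A × B` of a free product of
finite groups of orders `a` and `b` is a free group of rank `(a-1)(b-1)`. -/
theorem ker_coprod_toProd_free {A B : Type*} [Group A] [Group B]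
    [Finite A] [Finite B] :
    Nonempty (MonoidHom.ker (Coprod.toProd : Coprod A B →* A × B)
      ≃* FreeGroup (Fin ((Nat.card A - 1) * (Nat.card B - 1)))) := by
  classical
  have hinj := KerCoprodAux.F_injective (A := A) (B := B)
  have hrange := KerCoprodAux.range_F_eq_ker (A := A) (B := B)
  have hA : Nat.card {a : A // a ≠ 1} = Nat.card A - 1 := by
    have h1 := Nat.card_congr (Equiv.sumCompl (fun a : A => a = 1))
    rw [Nat.card_sum] at h1
    haveI : Unique {a : A // a = 1} := ⟨⟨⟨1, rfl⟩⟩, by rintro ⟨x, rfl⟩; rfl⟩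
    rw [Nat.card_unique] at h1
    have h2 : Nat.card {a : A // a ≠ 1} = Nat.card {a : A // ¬a = 1} := rfl
    omega
  have hB : Nat.card {b : B // b ≠ 1} = Nat.card B - 1 := by
    have h1 := Nat.card_congr (Equiv.sumCompl (fun b : B => b = 1))
    rw [Nat.card_sum] at h1
    haveI : Unique {b : B // b = 1} := ⟨⟨⟨1, rfl⟩⟩, by rintro ⟨x, rfl⟩; rfl⟩
    rw [Nat.card_unique] at h1
    have h2 : Nat.card {b : B // b ≠ 1} = Nat.card {b : B // ¬b = 1} := rfl
    omega
  have hcard : Nat.card (KerCoprodAux.S A B) = (Nat.card A - 1) * (Nat.card B - 1) := by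
    rw [Nat.card_prod, hA, hB]
  exact ⟨((MulEquiv.subgroupCongr hrange).symm.trans
    (MonoidHom.ofInjective hinj).symm).trans
    (FreeGroup.freeGroupCongr ((Finite.equivFin (KerCoprodAux.S A B)).trans (finCongr hcard)))⟩
end
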